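/- Let b ∈ ℂ[X] have degree at most 3 and satisfy λ³·conj(b(1/conj(λ))) = b(λ) for all λ ≠ 0, and let r > 0 be a real number. Then there exists a polynomial b̂ ∈ ℝ[X] of degree at most 3 with real coefficients such that b̂(κ) = (2i·(i + κ)³ / r) · b((i − κ)/(i + κ)) for all κ ∈ ℂ with κ ≠ −i. -/
import Mathlib


open Polynomial

/-- Cayley transform of the numerator polynomials: if `b ∈ ℂ[X]` has degree at
most 3 and satisfies the degree-3 reality condition
`λ³·conj(b(1/conj λ)) = b(λ)`, and `r > 0`, then there is a real polynomial
`b̂` of degree at most 3 with `b̂(κ) = (2i(i+κ)³/r)·b((i−κ)/(i+κ))` for all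
`κ ≠ −i`. -/
theorem stmt_18 (b : ℂ[X]) (hdeg : b.degree ≤ 3)
    (hreal : ∀ l : ℂ, l ≠ 0 →
      l ^ 3 * (starRingEnd ℂ) (b.eval ((starRingEnd ℂ) l)⁻¹) = b.eval l)
    (r : ℝ) (hr : 0 < r) :
    ∃ bhat : ℝ[X], bhat.degree ≤ 3 ∧
      ∀ κ : ℂ, κ ≠ -Complex.I →
        Polynomial.aeval κ bhat =
          (2 * Complex.I * (Complex.I + κ) ^ 3 / (r : ℂ)) *
            b.eval ((Complex.I - κ) / (Complex.I + κ)) := by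
  have h3 : b.natDegree ≤ 3 := natDegree_le_iff_degree_le.mpr (by exact_mod_cast hdeg)
  have h4 : b.natDegree < 4 := by omega
  have heval : ∀ z : ℂ, b.eval z
      = b.coeff 0 + b.coeff 1 * z + b.coeff 2 * z^2 + b.coeff 3 * z^3 := by
    intro z
    rw [eval_eq_sum_range' h4]
    simp [Finset.sum_range_succ]
  -- coefficient form of the reality condition
  set q : ℂ[X] := C ((starRingEnd ℂ) (b.coeff 3)) + C ((starRingEnd ℂ) (b.coeff 2)) * X
      + C ((starRingEnd ℂ) (b.coeff 1)) * X^2 + C ((starRingEnd ℂ) (b.coeff 0)) * X^3 with hq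
  have hqb : q = b := by
    have hz : q - b = 0 := by
      apply eq_zero_of_infinite_isRoot
      apply Set.Infinite.mono (s := {0}ᶜ)
      · intro l hl
        have hl0 : l ≠ 0 := hl
        simp only [Set.mem_setOf_eq, IsRoot, eval_sub, sub_eq_zero]
        rw [← hreal l hl0, heval]
        have hcl : (starRingEnd ℂ) l ≠ 0 := by simpa using hl0
        simp only [hq, eval_add, eval_mul, eval_C, eval_pow, eval_X, map_add, map_mul,
          map_pow, map_inv₀, Complex.conj_conj]
        field_simp
        ring
      · exact Set.Finite.infinite_compl (Set.finite_singleton 0)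
    exact sub_eq_zero.mp hz
  have hc3 : b.coeff 3 = (starRingEnd ℂ) (b.coeff 0) := by
    have := congrArg (fun p => Polynomial.coeff p 3) hqb
    simpa [hq, coeff_add, coeff_C_mul, coeff_X_pow, coeff_C] using this.symm
  have hc2 : b.coeff 2 = (starRingEnd ℂ) (b.coeff 1) := by
    have := congrArg (fun p => Polynomial.coeff p 2) hqb
    simpa [hq, coeff_add, coeff_C_mul, coeff_X_pow, coeff_C] using this.symm
  set c0 := b.coeff 0 with hc0def
  set c1 := b.coeff 1 with hc1def
  refine ⟨C (4*(c0.re+c1.re)/r) + C (4*(3*c0.im+c1.im)/r) * X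
      + C (-4*(3*c0.re-c1.re)/r) * X^2 + C (-4*(c0.im-c1.im)/r) * X^3, ?_, ?_⟩
  · compute_degree
  · intro κ hκ
    have hne : Complex.I + κ ≠ 0 := by
      intro h; apply hκ; linear_combination h
    have hrne : (r : ℂ) ≠ 0 := by exact_mod_cast hr.ne'
    rw [heval, hc2, hc3]
    simp only [map_add, map_mul, map_pow, aeval_C, aeval_X, Complex.coe_algebraMap]
    set p := (Complex.I - κ)/(Complex.I + κ) with hpdef
    have hIκ : Complex.I - κ = p * (Complex.I + κ) := (div_mul_cancel₀ _ hne).symm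
    have key : (2 * Complex.I * (Complex.I + κ) ^ 3 / (r : ℂ)) *
        (c0 + c1 * p + (starRingEnd ℂ) c1 * p^2 + (starRingEnd ℂ) c0 * p^3)
        = (2 * Complex.I / (r:ℂ)) * (c0 * (Complex.I + κ)^3
          + c1 * (Complex.I - κ) * (Complex.I + κ)^2
          + (starRingEnd ℂ) c1 * (Complex.I - κ)^2 * (Complex.I + κ)
          + (starRingEnd ℂ) c0 * (Complex.I - κ)^3) := by
      rw [hIκ]; ring
    rw [key]
    have hcc0 : (starRingEnd ℂ) c0 = (c0.re : ℂ) - (c0.im : ℂ) * Complex.I := by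
      simp [Complex.ext_iff]
    have hcc1 : (starRingEnd ℂ) c1 = (c1.re : ℂ) - (c1.im : ℂ) * Complex.I := by
      simp [Complex.ext_iff]
    have hc0 : c0 = (c0.re : ℂ) + (c0.im : ℂ) * Complex.I := by simp [Complex.ext_iff]
    have hc1 : c1 = (c1.re : ℂ) + (c1.im : ℂ) * Complex.I := by simp [Complex.ext_iff]
    set a0 := c0.re; set b0 := c0.im; set a1 := c1.re; set b1 := c1.im
    rw [hcc0, hcc1, hc0, hc1]
    have hI2 : Complex.I ^ 2 = -1 := Complex.I_sq
    have hI3 : Complex.I ^ 3 = -Complex.I := by rw [pow_succ, hI2]; ring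
    have hI4 : Complex.I ^ 4 = 1 := by rw [pow_succ, hI3]; simp [Complex.I_mul_I]
    have hI5 : Complex.I ^ 5 = Complex.I := by rw [pow_succ, hI4]; ring
    have hI6 : Complex.I ^ 6 = -1 := by rw [pow_succ, hI5]; simp [Complex.I_mul_I]
    push_cast
    ring_nf
    simp only [hI2, hI3, hI4, hI5, hI6]
    ring
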